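/- arXiv:0801.0718 — 4 statements merged into one kernel-verified Lean document; each statement's English description precedes it below -/
import Mathlib

section
/- Let X be a progressively measurable càdlàg real-valued process on a filtered probability space satisfying the usual hypotheses. If X is sticky, then for every a.s. bounded stopping time τ, every event A ∈ F_τ with P(A) > 0, every ε > 0, and every real T with τ ≤ T almost surely, one has P(A ∩ {sup_{t ∈ [τ,T]} |X_τ − X_t| < ε}) > 0. -/
/-! On `A ∩ {τ < T}` stickiness applies to the stopping time equal to `τ` there and to `T`
elsewhere. On the rest of `A` one has `τ = T` almost surely, where the supremum is `0`. -/

open MeasureTheory Filter Set Topology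
open scoped NNReal ENNReal

def IsCadlag {Ω : Type*} (X : ℝ≥0 → Ω → ℝ) : Prop :=
  ∀ ω, (∀ t : ℝ≥0, ContinuousWithinAt (fun s => X s ω) (Set.Ici t) t) ∧
    ∀ t : ℝ≥0, 0 < t → ∃ l : ℝ,
      Filter.Tendsto (fun s => X s ω) (nhdsWithin t (Set.Iio t)) (nhds l)

def Sticky {Ω : Type*} {m : MeasurableSpace Ω} (𝓕 : MeasureTheory.Filtration ℝ≥0 m)
    (P : MeasureTheory.Measure Ω) (X : ℝ≥0 → Ω → ℝ) : Prop :=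
  ∀ ε : ℝ, 0 < ε → ∀ T : ℝ≥0, 0 < T → ∀ τ : Ω → ℝ≥0,
    MeasureTheory.IsStoppingTime 𝓕 (fun ω => (τ ω : WithTop ℝ≥0)) → 0 < P {ω | τ ω < T} →
    0 < P ({ω | (⨆ t ∈ Set.Icc (τ ω) T, |X (τ ω) ω - X t ω|) < ε} ∩ {ω | τ ω < T})

theorem MeasureTheory.IsStoppingTime.piecewise_const_of_le {Ω ι : Type*} {m : MeasurableSpace Ω}
    [LinearOrder ι] {f : Filtration ι m} {τ : Ω → WithTop ι} (hτ : IsStoppingTime f τ)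
    {A : Set Ω} [DecidablePred (· ∈ A)] (hA : MeasurableSet[hτ.measurableSpace] A)
    {T : WithTop ι} (hAT : ∀ ω ∈ A, τ ω ≤ T) :
    IsStoppingTime f (A.piecewise τ fun _ => T) := by
  intro t
  by_cases hTt : T ≤ t
  · convert @MeasurableSet.univ _ (f t)
    refine eq_univ_of_forall fun ω => ?_
    by_cases hω : ω ∈ A
    · simpa [hω] using (hAT ω hω).trans hTt
    · simpa [hω] using hTt
  · convert hA.2 t using 1
    ext ω
    by_cases hω : ω ∈ A
    · simp [hω]
    · simp [hω, hTt]

lemma iSup_Icc_self_abs_sub_self (x : ℝ≥0 → ℝ) (T : ℝ≥0) :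
    ⨆ t ∈ Icc T T, |x T - x t| = 0 := by
  refine le_antisymm (Real.iSup_le (fun t => Real.iSup_le (fun ht => ?_) le_rfl) le_rfl)
    (Real.iSup_nonneg fun t => Real.iSup_nonneg fun _ => abs_nonneg _)
  simp [ht.2.antisymm ht.1]

theorem Sticky.measure_inter_pos_of_lt {Ω : Type*} {m : MeasurableSpace Ω}
    {𝓕 : Filtration ℝ≥0 m} {P : Measure Ω} {X : ℝ≥0 → Ω → ℝ} (hsticky : Sticky 𝓕 P X)
    {τ : Ω → ℝ≥0} (hτ : IsStoppingTime 𝓕 (fun ω => (τ ω : WithTop ℝ≥0)))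
    {A : Set Ω} (hA : MeasurableSet[hτ.measurableSpace] A) {ε : ℝ} (hε : 0 < ε) {T : ℝ≥0}
    (hpos : 0 < P (A ∩ {ω | τ ω < T})) :
    0 < P (A ∩ {ω | (⨆ t ∈ Icc (τ ω) T, |X (τ ω) ω - X t ω|) < ε}) := by
  classical
  set B := A ∩ {ω | τ ω < T}
  have hB : MeasurableSet[hτ.measurableSpace] B := by
    have hlt := hτ.measurableSet_lt' T
    simp only [WithTop.coe_lt_coe] at hlt
    exact hA.inter hlt
  obtain ⟨ω₀, -, hω₀⟩ := nonempty_of_measure_ne_zero hpos.ne'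
  set σ : Ω → ℝ≥0 := B.piecewise τ fun _ => T
  have hσ : IsStoppingTime 𝓕 (fun ω => (σ ω : WithTop ℝ≥0)) := by
    have := hτ.piecewise_const_of_le hB (T := T) fun ω hω => mod_cast hω.2.le
    convert this using 1
    ext1 ω
    exact B.apply_piecewise _ _ fun _ (x : ℝ≥0) => (x : WithTop ℝ≥0)
  have hσB : {ω | σ ω < T} = B := by
    ext ω
    by_cases hω : ω ∈ B
    · simpa [σ, hω] using hω.2
    · simp [σ, hω]
  refine (hsticky ε hε T (hω₀.trans_le' zero_le) σ hσ (hσB ▸ hpos)).trans_le (measure_mono ?_)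
  rintro ω ⟨hsup, hω⟩
  rw [hσB] at hω
  simp only [σ, mem_ofPred_eq, piecewise_eq_of_mem _ _ _ hω] at hsup
  exact ⟨hω.1, hsup⟩

theorem sticky_of_a_implies_b_general {Ω : Type*} {m : MeasurableSpace Ω}
    (𝓕 : MeasureTheory.Filtration ℝ≥0 m) (P : MeasureTheory.Measure Ω)
    (X : ℝ≥0 → Ω → ℝ)
    (hsticky : Sticky 𝓕 P X)
    (τ : Ω → ℝ≥0) (hτ : MeasureTheory.IsStoppingTime 𝓕 (fun ω => (τ ω : WithTop ℝ≥0)))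
    (A : Set Ω) (hA : MeasurableSet[hτ.measurableSpace] A) (hApos : 0 < P A)
    (ε : ℝ) (hε : 0 < ε) (T : ℝ≥0) (hτT : ∀ᵐ ω ∂P, τ ω ≤ T) :
    0 < P (A ∩ {ω | (⨆ t ∈ Set.Icc (τ ω) T, |X (τ ω) ω - X t ω|) < ε}) := by
  rcases eq_zero_or_pos (P (A ∩ {ω | τ ω < T})) with hnull | hpos
  · refine hApos.trans_le (measure_mono_ae ?_)
    filter_upwards [hτT, measure_eq_zero_iff_ae_notMem.mp hnull] with ω hle hlt hω
    have hτω : τ ω = T := hle.antisymm (not_lt.mp fun h => hlt ⟨hω, h⟩)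
    refine ⟨hω, ?_⟩
    rw [mem_ofPred_eq, hτω, iSup_Icc_self_abs_sub_self (X · ω) T]
    exact hε
  · exact hsticky.measure_inter_pos_of_lt hτ hA hε hpos

/-- If a progressively measurable càdlàg process `X` on a filtered probability space
satisfying the usual hypotheses is sticky, then for every a.s. bounded stopping time `τ`,
every `A ∈ F_τ` with `P(A) > 0`, every `ε > 0` and every `T` with `τ ≤ T` a.s., we have
`P(A ∩ {sup_{t ∈ [τ, T]} |X_τ - X_t| < ε}) > 0`. -/
theorem sticky_of_a_implies_b {Ω : Type*} {m : MeasurableSpace Ω}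
    (𝓕 : MeasureTheory.Filtration ℝ≥0 m) (P : MeasureTheory.Measure Ω)
    [MeasureTheory.IsProbabilityMeasure P] [P.IsComplete]
    (hRC : ∀ t : ℝ≥0, (𝓕 t : MeasurableSpace Ω)
      = ⨅ s : ℝ≥0, ⨅ _ : t < s, (𝓕 s : MeasurableSpace Ω))
    (hNull : ∀ N : Set Ω, MeasurableSet N → P N = 0 → MeasurableSet[𝓕 0] N)
    (X : ℝ≥0 → Ω → ℝ) (hprog : MeasureTheory.ProgMeasurable 𝓕 X) (hcadlag : IsCadlag X)
    (hsticky : Sticky 𝓕 P X)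
    (τ : Ω → ℝ≥0) (hτ : MeasureTheory.IsStoppingTime 𝓕 (fun ω => (τ ω : WithTop ℝ≥0)))
    (hτbdd : ∃ C : ℝ≥0, ∀ᵐ ω ∂P, τ ω ≤ C)
    (A : Set Ω) (hA : MeasurableSet[hτ.measurableSpace] A) (hApos : 0 < P A)
    (ε : ℝ) (hε : 0 < ε) (T : ℝ≥0) (hτT : ∀ᵐ ω ∂P, τ ω ≤ T) :
    0 < P (A ∩ {ω | (⨆ t ∈ Set.Icc (τ ω) T, |X (τ ω) ω - X t ω|) < ε}) :=
  sticky_of_a_implies_b_general 𝓕 P X hsticky τ hτ A hA hApos ε hε T hτT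
end

section
/- Let X be a progressively measurable càdlàg real-valued process on a filtered probability space satisfying the usual hypotheses. Suppose that for every a.s. bounded stopping time τ, every A ∈ F_τ with P(A) > 0, every ε > 0, and every real T with τ ≤ T a.s., one has P(A ∩ {sup_{t ∈ [τ,T]} |X_τ − X_t| < ε}) > 0. Then for every a.s. bounded stopping time τ₀ and every δ > 0, the stopping time τ₁ = inf{t ≥ τ₀ : |X_t − X_{τ₀}| > δ} is unbounded on every A ∈ F_{τ₀} with P(A) > 0, i.e., for every real M one has P(A ∩ {τ₁ > M}) > 0. -/
open MeasureTheory Filter Set Topology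
open scoped NNReal ENNReal

/-- The first time after the stopping time `τ₀` at which the process `X` moves away from
`X_{τ₀}` by more than `δ`, with the convention `inf ∅ = +∞`. -/
noncomputable def hitTime {Ω : Type*} (X : ℝ≥0 → Ω → ℝ) (τ₀ : Ω → ℝ≥0) (δ : ℝ) (ω : Ω) : ℝ≥0∞ :=
  sInf ((fun u : ℝ≥0 => (u : ℝ≥0∞)) ''
    {u : ℝ≥0 | τ₀ ω ≤ u ∧ δ < |X u ω - X (τ₀ ω) ω|})

/- Apply the hypothesis to `τ₀` itself, with `ε = δ` and `T = max C M + 1` for an a.s. bound `C`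
of `τ₀`: on the event `{sup_{t ∈ [τ₀, T]} |X_{τ₀} - X_t| < δ}`, which meets `A` with positive
probability, the path stays within `δ` of `X_{τ₀}` up to time `T > M`, so `τ₁ ≥ T`.
Càdlàg paths are bounded on compact intervals, so this supremum is a genuine one and not the
junk value `0` of an unbounded real supremum. -/

theorem IsCompact.isBounded_image_of_continuousWithinAt_Ici_of_tendsto_nhdsLT
    {α β : Type*} [TopologicalSpace α] [LinearOrder α] [PseudoMetricSpace β] {g : α → β}
    (hright : ∀ t, ContinuousWithinAt g (Ici t) t)
    (hleft : ∀ t, ∃ y, Tendsto g (𝓝[<] t) (𝓝 y)) {K : Set α} (hK : IsCompact K) :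
    Bornology.IsBounded (g '' K) := by
  refine Bornology.isBounded_image_of_isLocallyBounded_of_isCompact hK fun t => ?_
  obtain ⟨y, hy⟩ := hleft t
  obtain ⟨s, hs, hs_bdd⟩ := Metric.exists_isBounded_image_of_tendsto hy
  obtain ⟨s', hs', hs'_bdd⟩ := Metric.exists_isBounded_image_of_tendsto (hright t)
  refine ⟨s ∪ s', nhdsLT_sup_nhdsGE t ▸ union_mem_sup hs hs', ?_⟩
  rw [image_union]
  exact hs_bdd.union hs'_bdd

theorem IsCadlag.isBounded_image {Ω : Type*} {X : ℝ≥0 → Ω → ℝ} (hX : IsCadlag X) (ω : Ω)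
    {K : Set ℝ≥0} (hK : IsCompact K) : Bornology.IsBounded ((X · ω) '' K) := by
  refine hK.isBounded_image_of_continuousWithinAt_Ici_of_tendsto_nhdsLT (hX ω).1 fun t => ?_
  rcases (zero_le (a := t)).eq_or_lt with rfl | ht
  · exact ⟨0, by simp⟩
  · exact (hX ω).2 t ht

theorem le_biSup_of_bddAbove_image {α β : Type*} [ConditionallyCompleteLattice α] {f : β → α}
    {s : Set β} (H : BddAbove (f '' s)) {c : β} (hc : c ∈ s) : f c ≤ ⨆ i ∈ s, f i :=
  le_ciSup₂ (f := fun i (_ : i ∈ s) => f i)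
    (H.mono <| iUnion_subset fun _ => range_subset_iff.2 fun hi => mem_image_of_mem f hi) c hc

theorem IsCadlag.abs_sub_lt_of_biSup_lt {Ω : Type*} {X : ℝ≥0 → Ω → ℝ} (hX : IsCadlag X)
    (ω : Ω) {a b u : ℝ≥0} {ε : ℝ} (hu : u ∈ Icc a b)
    (h : (⨆ t ∈ Icc a b, |X a ω - X t ω|) < ε) : |X a ω - X u ω| < ε := by
  obtain ⟨C, hC⟩ := (hX.isBounded_image ω isCompact_Icc).exists_norm_le
  have hbdd : BddAbove ((fun t => |X a ω - X t ω|) '' Icc a b) := by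
    refine ⟨C + C, forall_mem_image.2 fun t ht => (abs_sub _ _).trans ?_⟩
    exact add_le_add (hC _ ⟨a, ⟨le_rfl, hu.1.trans hu.2⟩, rfl⟩) (hC _ ⟨t, ht, rfl⟩)
  exact (le_biSup_of_bddAbove_image hbdd hu).trans_lt h

theorem le_hitTime_of_forall_abs_sub_le {Ω : Type*} {X : ℝ≥0 → Ω → ℝ} {τ₀ : Ω → ℝ≥0} {δ : ℝ}
    {ω : Ω} {T : ℝ≥0} (h : ∀ u ∈ Ico (τ₀ ω) T, |X u ω - X (τ₀ ω) ω| ≤ δ) :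
    (T : ℝ≥0∞) ≤ hitTime X τ₀ δ ω := by
  refine le_sInf ?_
  rintro _ ⟨u, ⟨hτu, hδu⟩, rfl⟩
  by_contra! huT
  exact (h u ⟨hτu, ENNReal.coe_lt_coe.1 huT⟩).not_gt hδu

theorem sticky_b_implies_c_general {Ω : Type*} {m : MeasurableSpace Ω}
    (𝓕 : MeasureTheory.Filtration ℝ≥0 m) (P : MeasureTheory.Measure Ω)
    (X : ℝ≥0 → Ω → ℝ) (hcadlag : IsCadlag X)
    (hb : ∀ τ : Ω → ℝ≥0, ∀ hτ : MeasureTheory.IsStoppingTime 𝓕 (fun ω => (τ ω : WithTop ℝ≥0)),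
      (∃ C : ℝ≥0, ∀ᵐ ω ∂P, τ ω ≤ C) →
      ∀ A : Set Ω, MeasurableSet[hτ.measurableSpace] A → 0 < P A →
      ∀ ε : ℝ, 0 < ε → ∀ T : ℝ≥0, (∀ᵐ ω ∂P, τ ω ≤ T) →
      0 < P (A ∩ {ω | (⨆ t ∈ Set.Icc (τ ω) T, |X (τ ω) ω - X t ω|) < ε}))
    (τ₀ : Ω → ℝ≥0) (hτ₀ : MeasureTheory.IsStoppingTime 𝓕 (fun ω => (τ₀ ω : WithTop ℝ≥0)))
    (hτ₀bdd : ∃ C : ℝ≥0, ∀ᵐ ω ∂P, τ₀ ω ≤ C) (δ : ℝ) (hδ : 0 < δ)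
    (A : Set Ω) (hA : MeasurableSet[hτ₀.measurableSpace] A) (hApos : 0 < P A) :
    ∀ M : ℝ≥0, 0 < P (A ∩ {ω | (M : ℝ≥0∞) < hitTime X τ₀ δ ω}) := by
  obtain ⟨C, hC⟩ := hτ₀bdd
  intro M
  have hτ₀T : ∀ᵐ ω ∂P, τ₀ ω ≤ max C M + 1 :=
    hC.mono fun ω h => (h.trans (le_max_left C M)).trans le_self_add
  have hMT : (M : ℝ≥0∞) < ↑(max C M + 1) := by
    exact_mod_cast (le_max_right C M).trans_lt (lt_add_one _)
  refine (hb τ₀ hτ₀ ⟨C, hC⟩ A hA hApos δ hδ _ hτ₀T).trans_le (measure_mono ?_)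
  rintro ω ⟨hωA, hωE⟩
  refine ⟨hωA, hMT.trans_le (le_hitTime_of_forall_abs_sub_le fun u hu => ?_)⟩
  rw [abs_sub_comm]
  exact (hcadlag.abs_sub_lt_of_biSup_lt ω (Ico_subset_Icc_self hu) hωE).le

/-- If for every a.s. bounded stopping time `τ`, every `A ∈ F_τ` with `P(A) > 0`, every
`ε > 0` and every `T` with `τ ≤ T` a.s. one has
`P(A ∩ {sup_{t ∈ [τ, T]} |X_τ - X_t| < ε}) > 0`, then for every a.s. bounded stopping
time `τ₀` and every `δ > 0` the stopping time `τ₁ = inf{t ≥ τ₀ : |X_t - X_{τ₀}| > δ}`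
is unbounded on every `A ∈ F_{τ₀}` with `P(A) > 0`. -/
theorem sticky_b_implies_c {Ω : Type*} {m : MeasurableSpace Ω}
    (𝓕 : MeasureTheory.Filtration ℝ≥0 m) (P : MeasureTheory.Measure Ω)
    [MeasureTheory.IsProbabilityMeasure P] [P.IsComplete]
    (hRC : ∀ t : ℝ≥0, (𝓕 t : MeasurableSpace Ω)
      = ⨅ s : ℝ≥0, ⨅ _ : t < s, (𝓕 s : MeasurableSpace Ω))
    (hNull : ∀ N : Set Ω, MeasurableSet N → P N = 0 → MeasurableSet[𝓕 0] N)
    (X : ℝ≥0 → Ω → ℝ) (hprog : MeasureTheory.ProgMeasurable 𝓕 X) (hcadlag : IsCadlag X)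
    (hb : ∀ τ : Ω → ℝ≥0, ∀ hτ : MeasureTheory.IsStoppingTime 𝓕 (fun ω => (τ ω : WithTop ℝ≥0)),
      (∃ C : ℝ≥0, ∀ᵐ ω ∂P, τ ω ≤ C) →
      ∀ A : Set Ω, MeasurableSet[hτ.measurableSpace] A → 0 < P A →
      ∀ ε : ℝ, 0 < ε → ∀ T : ℝ≥0, (∀ᵐ ω ∂P, τ ω ≤ T) →
      0 < P (A ∩ {ω | (⨆ t ∈ Set.Icc (τ ω) T, |X (τ ω) ω - X t ω|) < ε}))
    (τ₀ : Ω → ℝ≥0) (hτ₀ : MeasureTheory.IsStoppingTime 𝓕 (fun ω => (τ₀ ω : WithTop ℝ≥0)))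
    (hτ₀bdd : ∃ C : ℝ≥0, ∀ᵐ ω ∂P, τ₀ ω ≤ C) (δ : ℝ) (hδ : 0 < δ)
    (A : Set Ω) (hA : MeasurableSet[hτ₀.measurableSpace] A) (hApos : 0 < P A) :
    ∀ M : ℝ≥0, 0 < P (A ∩ {ω | (M : ℝ≥0∞) < hitTime X τ₀ δ ω}) :=
  sticky_b_implies_c_general 𝓕 P X hcadlag hb τ₀ hτ₀ hτ₀bdd δ hδ A hA hApos
end

section
/- Let X be a progressively measurable càdlàg real-valued process on a filtered probability space satisfying the usual hypotheses. Suppose that for every a.s. bounded stopping time τ₀ and every δ > 0, the stopping time τ₁ = inf{t ≥ τ₀ : |X_t − X_{τ₀}| > δ} satisfies: for every A ∈ F_{τ₀} with P(A) > 0 and every real M, P(A ∩ {τ₁ > M}) > 0. Then X is sticky, i.e., for all ε > 0, T > 0 and all stopping times τ with P(τ < T) > 0, one has P({sup_{t ∈ [τ,T]} |X_τ − X_t| < ε} ∩ {τ < T}) > 0. -/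
open MeasureTheory Filter Set Topology
open scoped NNReal ENNReal

/-!
Stop at `τ ∧ T` and apply the hypothesis with `δ = ε / 2`, `A = {τ < T}` and `M = T`. On the
resulting event of positive probability, `X` has not moved by more than `ε / 2` away from `X_τ`
before time `T`, so the supremum over `[τ, T]` is at most `ε / 2 < ε`.
-/

section HitTime

variable {Ω : Type*} {X : ℝ≥0 → Ω → ℝ} {τ₀ : Ω → ℝ≥0} {δ : ℝ} {ω : Ω}

lemma abs_sub_le_of_lt_hitTime {t u : ℝ≥0} (hτu : τ₀ ω ≤ u) (hut : u ≤ t)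
    (ht : (t : ℝ≥0∞) < hitTime X τ₀ δ ω) : |X u ω - X (τ₀ ω) ω| ≤ δ := by
  by_contra! hδ
  have hle : hitTime X τ₀ δ ω ≤ u := sInf_le ⟨u, ⟨hτu, hδ⟩, rfl⟩
  exact (ht.trans_le (hle.trans (by exact_mod_cast hut))).false

lemma iSup_abs_sub_le_of_lt_hitTime {T : ℝ≥0} (hδ : 0 ≤ δ)
    (hT : (T : ℝ≥0∞) < hitTime X τ₀ δ ω) :
    (⨆ t ∈ Icc (τ₀ ω) T, |X (τ₀ ω) ω - X t ω|) ≤ δ :=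
  Real.iSup_le (fun t => Real.iSup_le (fun ht => by
    rw [abs_sub_comm]; exact abs_sub_le_of_lt_hitTime ht.1 ht.2 hT) hδ) hδ

end HitTime

namespace MeasureTheory.IsStoppingTime

variable {Ω : Type*} {m : MeasurableSpace Ω} {𝓕 : Filtration ℝ≥0 m} {τ : Ω → ℝ≥0}

lemma coe_nnreal_min_const
    (hτ : IsStoppingTime 𝓕 (fun ω => (τ ω : WithTop ℝ≥0))) (T : ℝ≥0) :
    IsStoppingTime 𝓕 (fun ω => ((min (τ ω) T : ℝ≥0) : WithTop ℝ≥0)) := by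
  simpa only [WithTop.coe_min] using hτ.min_const T

lemma measurableSet_lt_const_of_min_const
    (hτ : IsStoppingTime 𝓕 (fun ω => (τ ω : WithTop ℝ≥0))) (T : ℝ≥0) :
    MeasurableSet[(hτ.coe_nnreal_min_const T).measurableSpace] {ω | τ ω < T} := by
  have hset : {ω | τ ω < T} = {ω | ((min (τ ω) T : ℝ≥0) : WithTop ℝ≥0) < T} := by
    ext ω; simp only [mem_ofPred_eq, WithTop.coe_lt_coe, min_lt_iff, lt_irrefl, or_false]
  rw [hset]
  exact (hτ.coe_nnreal_min_const T).measurableSet_lt' T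

end MeasureTheory.IsStoppingTime

theorem sticky_c_implies_a_general {Ω : Type*} {m : MeasurableSpace Ω}
    (𝓕 : MeasureTheory.Filtration ℝ≥0 m) (P : MeasureTheory.Measure Ω)
    (X : ℝ≥0 → Ω → ℝ)
    (hc : ∀ τ₀ : Ω → ℝ≥0, ∀ hτ₀ : MeasureTheory.IsStoppingTime 𝓕 (fun ω => (τ₀ ω : WithTop ℝ≥0)),
      (∃ C : ℝ≥0, ∀ᵐ ω ∂P, τ₀ ω ≤ C) → ∀ δ : ℝ, 0 < δ →
      ∀ A : Set Ω, MeasurableSet[hτ₀.measurableSpace] A → 0 < P A →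
      ∀ M : ℝ≥0, 0 < P (A ∩ {ω | (M : ℝ≥0∞) < hitTime X τ₀ δ ω})) :
    Sticky 𝓕 P X := by
  intro ε hε T _ τ hτ hP
  have key := hc _ (hτ.coe_nnreal_min_const T) ⟨T, ae_of_all _ fun ω => min_le_right _ _⟩
    (ε / 2) (half_pos hε) _ (hτ.measurableSet_lt_const_of_min_const T) hP T
  refine key.trans_le (measure_mono ?_)
  rintro ω ⟨hlt : τ ω < T, hhit⟩
  have hsup := iSup_abs_sub_le_of_lt_hitTime (half_pos hε).le hhit
  simp only [min_eq_left hlt.le] at hsup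
  exact ⟨hsup.trans_lt (half_lt_self hε), hlt⟩

/-- If for every a.s. bounded stopping time `τ₀` and every `δ > 0`, the stopping time
`τ₁ = inf{t ≥ τ₀ : |X_t - X_{τ₀}| > δ}` is unbounded on every `A ∈ F_{τ₀}` with
`P(A) > 0`, then `X` is sticky. -/
theorem sticky_c_implies_a {Ω : Type*} {m : MeasurableSpace Ω}
    (𝓕 : MeasureTheory.Filtration ℝ≥0 m) (P : MeasureTheory.Measure Ω)
    [MeasureTheory.IsProbabilityMeasure P] [P.IsComplete]
    (hRC : ∀ t : ℝ≥0, (𝓕 t : MeasurableSpace Ω)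
      = ⨅ s : ℝ≥0, ⨅ _ : t < s, (𝓕 s : MeasurableSpace Ω))
    (hNull : ∀ N : Set Ω, MeasurableSet N → P N = 0 → MeasurableSet[𝓕 0] N)
    (X : ℝ≥0 → Ω → ℝ) (hprog : MeasureTheory.ProgMeasurable 𝓕 X) (hcadlag : IsCadlag X)
    (hc : ∀ τ₀ : Ω → ℝ≥0, ∀ hτ₀ : MeasureTheory.IsStoppingTime 𝓕 (fun ω => (τ₀ ω : WithTop ℝ≥0)),
      (∃ C : ℝ≥0, ∀ᵐ ω ∂P, τ₀ ω ≤ C) → ∀ δ : ℝ, 0 < δ →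
      ∀ A : Set Ω, MeasurableSet[hτ₀.measurableSpace] A → 0 < P A →
      ∀ M : ℝ≥0, 0 < P (A ∩ {ω | (M : ℝ≥0∞) < hitTime X τ₀ δ ω})) :
    Sticky 𝓕 P X :=
  sticky_c_implies_a_general 𝓕 P X hc
end

section
/- Let X be a continuous process that is progressively measurable and sticky with respect to a filtration (F_t)_{t≥0} satisfying the usual hypotheses. Let (ν_t)_{t≥0} be a family of (F_t)-stopping times such that almost surely the map t ↦ ν_t is continuous and nondecreasing, ν_0 = 0, and ν_t is a.s. bounded for each t ≥ 0. Define the time-changed process X̃_t = X_{ν_t} and the time-changed filtration F̃_t = F_{ν_t}. Then X̃ is sticky with respect to the filtration (F̃_t)_{t≥0}. -/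
open MeasureTheory Filter Set Topology
open scoped NNReal ENNReal

/-!
Given a `𝓖`-stopping time `τ` and a horizon `T`, let `C` bound `ν_T` almost surely and set
`σ = ν_τ` on `{τ < T}` and `σ = C + 1` elsewhere (modulo a null set). Because `ν` has continuous
monotone paths and `𝓕` is right-continuous, `σ` is an `𝓕`-stopping time with `{σ < C + 1} = {τ < T}`
almost surely. Since `ν` maps `[τ, T]` monotonically into `[σ, C + 1]`, the oscillation of `X ∘ ν`
on `[τ, T]` is bounded by that of `X` on `[σ, C + 1]`, so stickiness of `X` at `σ` transfers.
-/

theorem NNReal.exists_rat_toNNReal_btwn {a b : ℝ≥0} (h : a < b) :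
    ∃ q : ℚ, a < (q : ℝ).toNNReal ∧ (q : ℝ).toNNReal < b := by
  obtain ⟨q, haq, hqb⟩ := exists_rat_btwn (NNReal.coe_lt_coe.2 h)
  exact ⟨q, Real.lt_toNNReal_iff_coe_lt.2 haq,
    (Real.toNNReal_lt_iff_lt_coe (a.coe_nonneg.trans haq.le)).2 hqb⟩

theorem Monotone.lt_and_lt_iff_exists_rat {f : ℝ≥0 → ℝ≥0} (hf : Monotone f) {x : ℝ≥0}
    (hfx : ContinuousWithinAt f (Ici x) x) {T s : ℝ≥0} :
    x < T ∧ f x < s ↔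
      ∃ q : ℚ, (q : ℝ).toNNReal < T ∧ x < (q : ℝ).toNNReal ∧ f (q : ℝ).toNNReal < s := by
  constructor
  · rintro ⟨hxT, hfxs⟩
    have hmem : Iio T ∩ f ⁻¹' Iio s ∈ 𝓝[≥] x :=
      inter_mem (nhdsWithin_le_nhds (Iio_mem_nhds hxT)) (hfx (Iio_mem_nhds hfxs))
    obtain ⟨u, hxu, hu⟩ := mem_nhdsGE_iff_exists_Ico_subset.1 hmem
    obtain ⟨q, hxq, hqu⟩ := NNReal.exists_rat_toNNReal_btwn hxu
    exact ⟨q, (hu ⟨hxq.le, hqu⟩).1, hxq, (hu ⟨hxq.le, hqu⟩).2⟩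
  · rintro ⟨q, hqT, hxq, hfq⟩
    exact ⟨hxq.trans hqT, (hf hxq.le).trans_lt hfq⟩

theorem Real.biSup_comp_le_biSup {α β : Type*} {f : β → ℝ} {g : α → β} {s : Set α} {t : Set β}
    (hf : ∀ y, 0 ≤ f y) (hft : BddAbove (f '' t)) (hg : MapsTo g s t) :
    ⨆ x ∈ s, f (g x) ≤ ⨆ y ∈ t, f y := by
  have hnonneg : 0 ≤ ⨆ y ∈ t, f y := Real.iSup_nonneg fun y => Real.iSup_nonneg fun _ => hf y
  obtain ⟨M, hM⟩ := hft
  have hbdd : BddAbove (⋃ y, range fun _ : y ∈ t => f y) := by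
    refine ⟨M, ?_⟩
    rintro _ ⟨_, ⟨y, rfl⟩, ⟨hy, rfl⟩⟩
    exact hM ⟨y, hy, rfl⟩
  exact Real.iSup_le (fun x => Real.iSup_le (fun hx => le_ciSup₂ hbdd (g x) (hg hx)) hnonneg)
    hnonneg

theorem Monotone.biSup_abs_sub_comp_le {α β : Type*} [Preorder α] [Preorder β]
    [TopologicalSpace β] [CompactIccSpace β] {f : β → ℝ} (hf : Continuous f) {g : α → β}
    (hg : Monotone g) {a b : α} {c : β} (hbc : g b ≤ c) :
    ⨆ t ∈ Icc a b, |f (g a) - f (g t)| ≤ ⨆ u ∈ Icc (g a) c, |f (g a) - f u| :=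
  Real.biSup_comp_le_biSup (fun _ => abs_nonneg _)
    (isCompact_Icc.bddAbove_image (continuous_const.sub hf).abs.continuousOn)
    fun _ ht => ⟨hg ht.1, (hg ht.2).trans hbc⟩

namespace MeasureTheory

theorem Filtration.isRightContinuous_of_eq_iInf {ι Ω : Type*} [LinearOrder ι] [DenselyOrdered ι]
    [NoMaxOrder ι] {m : MeasurableSpace Ω} {𝓕 : Filtration ι m}
    (h𝓕 : ∀ t, 𝓕 t = ⨅ s, ⨅ _ : t < s, 𝓕 s) : 𝓕.IsRightContinuous :=
  ⟨fun t => by rw [Filtration.rightCont_eq, ← h𝓕]⟩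

namespace IsStoppingTime

variable {Ω ι : Type*} {m : MeasurableSpace Ω} [LinearOrder ι] {f : Filtration ι m}
  {η : Ω → WithTop ι}

theorem measurableSet_inter_lt [TopologicalSpace ι] [OrderTopology ι] [FirstCountableTopology ι]
    (hη : IsStoppingTime f η) {A : Set Ω} (hA : MeasurableSet[hη.measurableSpace] A) (i : ι) :
    MeasurableSet[f i] (A ∩ {ω | η ω < i}) := by
  have h : A ∩ {ω | η ω < i} = A ∩ {ω | η ω ≤ i} ∩ {ω | η ω < i} := by
    ext ω
    simp only [mem_inter_iff, mem_ofPred_eq]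
    exact ⟨fun h => ⟨⟨h.1, h.2.le⟩, h.2⟩, fun h => ⟨h.1.1, h.2⟩⟩
  rw [h]
  exact (hA.2 i).inter (hη.measurableSet_lt i)

theorem measurableSet_union_of_le (hη : IsStoppingTime f η) {A N : Set Ω} {i : ι}
    (hA : MeasurableSet[hη.measurableSpace] A) (hN : MeasurableSet[f i] N)
    (hle : ∀ ω ∉ N, η ω ≤ i) : MeasurableSet[f i] (N ∪ A) := by
  have h : N ∪ A = N ∪ (A ∩ {ω | η ω ≤ i}) := by
    ext ω
    by_cases hω : ω ∈ N
    · simp [hω]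
    · simp [hω, hle ω hω]
  rw [h]
  exact hN.union (hA.2 i)

end IsStoppingTime

theorem isStoppingTime_piecewise_of_measurableSet_lt {Ω ι : Type*} {m : MeasurableSpace Ω}
    [ConditionallyCompleteLinearOrder ι] [TopologicalSpace ι] [OrderTopology ι]
    [FirstCountableTopology ι] [DenselyOrdered ι] [NoMaxOrder ι] {f : Filtration ι m}
    [f.IsRightContinuous] {E : Set Ω} [DecidablePred (· ∈ E)] {ρ : Ω → ι} {c : ι}
    (hρ : ∀ i, MeasurableSet[f i] (E ∩ {ω | ρ ω < i})) (hE : ∀ i, c < i → MeasurableSet[f i] Eᶜ) :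
    IsStoppingTime f fun ω => (E.piecewise ρ (fun _ => c) ω : WithTop ι) := by
  refine isStoppingTime_of_measurableSet_lt_of_isRightContinuous fun i => ?_
  simp only [WithTop.coe_lt_coe]
  by_cases hc : c < i
  · have h : {ω | E.piecewise ρ (fun _ => c) ω < i} = E ∩ {ω | ρ ω < i} ∪ Eᶜ := by
      ext ω
      by_cases hω : ω ∈ E <;> simp [hω, hc]
    exact h ▸ (hρ i).union (hE i hc)
  · have h : {ω | E.piecewise ρ (fun _ => c) ω < i} = E ∩ {ω | ρ ω < i} := by
      ext ω
      by_cases hω : ω ∈ E <;> simp [hω, hc]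
    exact h ▸ hρ i

section TimeChange

variable {Ω : Type*} {m : MeasurableSpace Ω} {𝓕 : Filtration ℝ≥0 m} {ν : ℝ≥0 → Ω → ℝ≥0}
  {τ : Ω → ℝ≥0} {N : Set Ω}

/-- Right-continuity of the paths of `ν` lets `{ν_τ < s}` be approximated by the events
`{τ < q} ∈ 𝓕_{ν_q}` at rational times `q`. -/
theorem measurableSet_timeChange_lt (hν : ∀ t, IsStoppingTime 𝓕 fun ω => (ν t ω : WithTop ℝ≥0))
    (hτ : ∀ t, MeasurableSet[(hν t).measurableSpace] {ω | τ ω < t}) (hN : MeasurableSet[𝓕 0] N)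
    (hreg : ∀ ω ∉ N, Continuous (ν · ω) ∧ Monotone (ν · ω)) (T s : ℝ≥0) :
    MeasurableSet[𝓕 s] (({ω | τ ω < T} \ N) ∩ {ω | ν (τ ω) ω < s}) := by
  have h : ({ω | τ ω < T} \ N) ∩ {ω | ν (τ ω) ω < s} = Nᶜ ∩ ⋃ (q : ℚ) (_ : (q : ℝ).toNNReal < T),
      {ω | τ ω < (q : ℝ).toNNReal} ∩ {ω | ν (q : ℝ).toNNReal ω < s} := by
    ext ω
    by_cases hω : ω ∈ N
    · simp [hω]
    · have := (hreg ω hω).2.lt_and_lt_iff_exists_rat (x := τ ω)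
        (hreg ω hω).1.continuousWithinAt (T := T) (s := s)
      simpa only [mem_inter_iff, Set.mem_sdiff, mem_ofPred_eq, mem_compl_iff, mem_iUnion,
        exists_prop, hω, not_false_eq_true, and_true, true_and] using this
  rw [h]
  refine (𝓕.mono (zero_le : 0 ≤ s) _ hN).compl.inter (.iUnion fun q => .iUnion fun _ => ?_)
  simpa only [WithTop.coe_lt_coe] using (hν _).measurableSet_inter_lt (hτ _) s

theorem isStoppingTime_piecewise_timeChange [𝓕.IsRightContinuous]
    (hν : ∀ t, IsStoppingTime 𝓕 fun ω => (ν t ω : WithTop ℝ≥0))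
    (hτ : ∀ t, MeasurableSet[(hν t).measurableSpace] {ω | τ ω < t}) (hN : MeasurableSet[𝓕 0] N)
    (hreg : ∀ ω ∉ N, Continuous (ν · ω) ∧ Monotone (ν · ω)) {T c : ℝ≥0}
    (hνT : ∀ ω ∉ N, ν T ω ≤ c) [DecidablePred (· ∈ {ω | τ ω < T} \ N)] :
    IsStoppingTime 𝓕 fun ω =>
      (({ω | τ ω < T} \ N).piecewise (fun ω => ν (τ ω) ω) (fun _ => c) ω : WithTop ℝ≥0) := by
  refine isStoppingTime_piecewise_of_measurableSet_lt
    (measurableSet_timeChange_lt hν hτ hN hreg T) fun s hs => ?_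
  rw [compl_sdiff]
  exact 𝓕.mono hs.le _ <| (hν T).measurableSet_union_of_le (hτ T).compl (𝓕.mono zero_le _ hN)
    fun ω hω => WithTop.coe_le_coe.2 (hνT ω hω)

end TimeChange

end MeasureTheory

theorem sticky_timeChange_general {Ω : Type*} {m : MeasurableSpace Ω}
    (𝓕 : MeasureTheory.Filtration ℝ≥0 m) (P : MeasureTheory.Measure Ω)
    (hRC : ∀ t : ℝ≥0, (𝓕 t : MeasurableSpace Ω)
      = ⨅ s : ℝ≥0, ⨅ _ : t < s, (𝓕 s : MeasurableSpace Ω))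
    (hNull : ∀ N : Set Ω, MeasurableSet N → P N = 0 → MeasurableSet[𝓕 0] N)
    (X : ℝ≥0 → Ω → ℝ)
    (hcont : ∀ ω : Ω, Continuous fun t => X t ω)
    (hsticky : Sticky 𝓕 P X)
    (ν : ℝ≥0 → Ω → ℝ≥0) (hν : ∀ t : ℝ≥0, MeasureTheory.IsStoppingTime 𝓕 (fun ω => (ν t ω : WithTop ℝ≥0)))
    (hνreg : ∀ᵐ ω ∂P, Continuous (fun t => ν t ω) ∧ Monotone fun t => ν t ω)
    (hνbdd : ∀ t : ℝ≥0, ∃ C : ℝ≥0, ∀ᵐ ω ∂P, ν t ω ≤ C)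
    (𝓖 : MeasureTheory.Filtration ℝ≥0 m)
    (h𝓖 : ∀ t : ℝ≥0, (𝓖 t : MeasurableSpace Ω) = (hν t).measurableSpace) :
    Sticky 𝓖 P (fun t ω => X (ν t ω) ω) := by
  classical
  intro ε hε T _ τ hτ hτT
  have := Filtration.isRightContinuous_of_eq_iInf hRC
  obtain ⟨C, hC⟩ := hνbdd T
  obtain ⟨N, hbad, hNm, hN0⟩ := exists_measurable_superset_of_null (ae_iff.1 (hνreg.and hC))
  have hgood : ∀ ω ∉ N, (Continuous (ν · ω) ∧ Monotone (ν · ω)) ∧ ν T ω ≤ C :=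
    fun ω hω => not_not.1 fun h => hω (hbad h)
  have hτν : ∀ t, MeasurableSet[(hν t).measurableSpace] {ω | τ ω < t} := fun t => by
    simpa only [WithTop.coe_lt_coe] using (h𝓖 t ▸ hτ.measurableSet_lt t :)
  set E := {ω | τ ω < T} \ N
  set σ := E.piecewise (fun ω => ν (τ ω) ω) fun _ => C + 1
  have hσ : IsStoppingTime 𝓕 fun ω => (σ ω : WithTop ℝ≥0) :=
    isStoppingTime_piecewise_timeChange hν hτν (hNull N hNm hN0) (fun ω hω => (hgood ω hω).1)
      fun ω hω => (hgood ω hω).2.trans (le_add_right le_rfl)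
  have hσE : {ω | σ ω < C + 1} = E := by
    ext ω
    by_cases hω : ω ∈ E
    · simp [σ, hω, (((hgood ω hω.2).1.2 hω.1.le).trans (hgood ω hω.2).2).trans_lt (lt_add_one C)]
    · simp [σ, hω]
  have hpos : 0 < P {ω | σ ω < C + 1} := by rwa [hσE, measure_sdiff_null hN0]
  refine (hsticky ε hε (C + 1) (by positivity) σ hσ hpos).trans_le (measure_mono ?_)
  rintro ω ⟨hsup, hσC⟩
  have hωE : ω ∈ E := hσE ▸ hσC
  obtain ⟨⟨-, hmono⟩, hνT⟩ := hgood ω hωE.2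
  refine ⟨show _ < ε from lt_of_le_of_lt ?_ hsup, hωE.1⟩
  rw [show σ ω = ν (τ ω) ω from E.piecewise_eq_of_mem _ _ hωE]
  exact hmono.biSup_abs_sub_comp_le (hcont ω) (hνT.trans (le_add_right le_rfl))

/-- Let `X` be a continuous, progressively measurable process that is sticky with respect
to the filtration `𝓕`, and let `(ν_t)` be a family of `𝓕`-stopping times such that a.s.
`t ↦ ν_t` is continuous and nondecreasing, `ν_0 = 0`, and each `ν_t` is a.s. bounded.
Then the time-changed process `X̃_t = X_{ν_t}` is sticky with respect to the time-changed
filtration `F̃_t = F_{ν_t}`. -/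
theorem sticky_timeChange {Ω : Type*} {m : MeasurableSpace Ω}
    (𝓕 : MeasureTheory.Filtration ℝ≥0 m) (P : MeasureTheory.Measure Ω)
    [MeasureTheory.IsProbabilityMeasure P] [P.IsComplete]
    (hRC : ∀ t : ℝ≥0, (𝓕 t : MeasurableSpace Ω)
      = ⨅ s : ℝ≥0, ⨅ _ : t < s, (𝓕 s : MeasurableSpace Ω))
    (hNull : ∀ N : Set Ω, MeasurableSet N → P N = 0 → MeasurableSet[𝓕 0] N)
    (X : ℝ≥0 → Ω → ℝ) (hprog : MeasureTheory.ProgMeasurable 𝓕 X)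
    (hcont : ∀ ω : Ω, Continuous fun t => X t ω)
    (hsticky : Sticky 𝓕 P X)
    (ν : ℝ≥0 → Ω → ℝ≥0) (hν : ∀ t : ℝ≥0, MeasureTheory.IsStoppingTime 𝓕 (fun ω => (ν t ω : WithTop ℝ≥0)))
    (hνreg : ∀ᵐ ω ∂P, Continuous (fun t => ν t ω) ∧ Monotone fun t => ν t ω)
    (hν0 : ∀ ω : Ω, ν 0 ω = 0)
    (hνbdd : ∀ t : ℝ≥0, ∃ C : ℝ≥0, ∀ᵐ ω ∂P, ν t ω ≤ C)
    (𝓖 : MeasureTheory.Filtration ℝ≥0 m)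
    (h𝓖 : ∀ t : ℝ≥0, (𝓖 t : MeasurableSpace Ω) = (hν t).measurableSpace) :
    Sticky 𝓖 P (fun t ω => X (ν t ω) ω) :=
  sticky_timeChange_general 𝓕 P hRC hNull X hcont hsticky ν hν hνreg hνbdd 𝓖 h𝓖
end
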